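/- arXiv:2303.11920 — 2 statements merged into one kernel-verified Lean document; each statement's English description precedes it below -/
import Mathlib

section
/- For a linear additive model f(x) = Σ_{i∈N} w_i u_i(x_i) with positive weights summing to 1 and each u_i attaining both 0 and 1, and for any instance x and any set S ⊆ N of features, the range of f over variations of the features in S equals the sum of their weights: ymax_S(x) − ymin_S(x) = Σ_{k∈S} w_k. -/
/-!
Fixing the features outside `S` fixes their part of an additive model, while the features in `S`
can be chosen independently of one another. So over the instances agreeing with `x` outside `S`,
the extremes of `∑ i, w i * u i (y i)` are attained coordinatewise: `w i` for the maximum and `0`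
for the minimum of each summand with `i ∈ S`.
-/

set_option linter.unusedSectionVars false

open Finset

variable {N : Type*} [Fintype N] [DecidableEq N]
variable {X : N → Type*} [∀ i, Fintype (X i)] [∀ i, DecidableEq (X i)] [∀ i, Nonempty (X i)]

/-- The instances that agree with `x` on every feature outside `S`. -/
def varies (x : ∀ i, X i) (S : Finset N) : Finset (∀ i, X i) :=
  Finset.univ.filter (fun y => ∀ j ∉ S, y j = x j)

theorem varies_nonempty (x : ∀ i, X i) (S : Finset N) : (varies x S).Nonempty :=
  ⟨x, by simp [varies]⟩

/-- `ymin_S(x)`: the minimum of `f` over all instances agreeing with `x` outside `S`. -/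
noncomputable def ymin (f : (∀ i, X i) → ℝ) (x : ∀ i, X i) (S : Finset N) : ℝ :=
  (varies x S).inf' (varies_nonempty x S) f

/-- `ymax_S(x)`: the maximum of `f` over all instances agreeing with `x` outside `S`. -/
noncomputable def ymax (f : (∀ i, X i) → ℝ) (x : ∀ i, X i) (S : Finset N) : ℝ :=
  (varies x S).sup' (varies_nonempty x S) f

/-- Contextual Importance `ω_{S,I}(x)`. -/
noncomputable def CI (f : (∀ i, X i) → ℝ) (x : ∀ i, X i) (S I : Finset N) : ℝ :=
  (ymax f x S - ymin f x S) / (ymax f x I - ymin f x I)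

/-- Contextual Utility `CU_S(x)`. -/
noncomputable def CU (f : (∀ i, X i) → ℝ) (x : ∀ i, X i) (S : Finset N) : ℝ :=
  (f x - ymin f x S) / (ymax f x S - ymin f x S)

/-- Contextual influence `φ_{S,I}(x) = ω_{S,I}(x)·(CU_S(x) − φ₀)`. -/
noncomputable def Cinfl (f : (∀ i, X i) → ℝ) (x : ∀ i, X i) (S I : Finset N) (φ₀ : ℝ) : ℝ :=
  CI f x S I * (CU f x S - φ₀)

section AdditiveModel

variable {g : ∀ i, X i → ℝ} {f : (∀ i, X i) → ℝ} {x : ∀ i, X i} {S : Finset N}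

theorem mem_varies_iff {y : ∀ i, X i} : y ∈ varies x S ↔ ∀ j ∉ S, y j = x j := by
  simp [varies]

theorem piecewise_mem_varies (z : ∀ i, X i) : S.piecewise z x ∈ varies x S :=
  mem_varies_iff.2 fun _ hj => S.piecewise_eq_of_notMem z x hj

theorem sum_eq_of_mem_varies {y : ∀ i, X i} (hy : y ∈ varies x S) :
    ∑ i, g i (y i) = ∑ i ∈ S, g i (y i) + ∑ i ∈ Sᶜ, g i (x i) := by
  rw [← sum_add_sum_compl S]
  congr 1
  exact sum_congr rfl fun i hi => by rw [mem_varies_iff.1 hy i (mem_compl.1 hi)]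

theorem sum_piecewise_eq (z : ∀ i, X i) :
    ∑ i, g i (S.piecewise z x i) = ∑ i ∈ S, g i (z i) + ∑ i ∈ Sᶜ, g i (x i) := by
  rw [sum_eq_of_mem_varies (piecewise_mem_varies z)]
  congr 1
  exact sum_congr rfl fun i hi => by rw [S.piecewise_eq_of_mem z x hi]

theorem ymax_eq_of_isGreatest (hf : ∀ y, f y = ∑ i, g i (y i)) {M : N → ℝ}
    (hM : ∀ i, IsGreatest (Set.range (g i)) (M i)) :
    ymax f x S = ∑ i ∈ S, M i + ∑ i ∈ Sᶜ, g i (x i) := by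
  apply le_antisymm
  · refine sup'_le _ _ fun y hy => ?_
    rw [hf, sum_eq_of_mem_varies hy]
    gcongr with i
    exact (hM i).2 ⟨y i, rfl⟩
  · choose z hz using fun i => (hM i).1
    refine le_sup'_of_le f (piecewise_mem_varies z) (le_of_eq ?_)
    rw [hf, sum_piecewise_eq]
    simp only [hz]

theorem ymin_eq_of_isLeast (hf : ∀ y, f y = ∑ i, g i (y i)) {m : N → ℝ}
    (hm : ∀ i, IsLeast (Set.range (g i)) (m i)) :
    ymin f x S = ∑ i ∈ S, m i + ∑ i ∈ Sᶜ, g i (x i) := by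
  apply le_antisymm
  · choose z hz using fun i => (hm i).1
    refine inf'_le_of_le f (piecewise_mem_varies z) (le_of_eq ?_)
    rw [hf, sum_piecewise_eq]
    simp only [hz]
  · refine le_inf' _ _ fun y hy => ?_
    rw [hf, sum_eq_of_mem_varies hy]
    gcongr with i
    exact (hm i).2 ⟨y i, rfl⟩

theorem ymax_sub_ymin_of_additive (hf : ∀ y, f y = ∑ i, g i (y i)) {m M : N → ℝ}
    (hm : ∀ i, IsLeast (Set.range (g i)) (m i)) (hM : ∀ i, IsGreatest (Set.range (g i)) (M i)) :
    ymax f x S - ymin f x S = ∑ i ∈ S, (M i - m i) := by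
  rw [ymax_eq_of_isGreatest hf hM, ymin_eq_of_isLeast hf hm, sum_sub_distrib]
  ring

end AdditiveModel

theorem isGreatest_range_const_mul {α : Type*} {u : α → ℝ} {c : ℝ} (hc : 0 ≤ c)
    (hu : ∀ t, u t ≤ 1) (hu1 : ∃ t, u t = 1) : IsGreatest (Set.range (fun t => c * u t)) c := by
  obtain ⟨t₁, ht₁⟩ := hu1
  refine ⟨⟨t₁, by simp [ht₁]⟩, ?_⟩
  rintro _ ⟨t, rfl⟩
  exact mul_le_of_le_one_right hc (hu t)

theorem isLeast_range_const_mul {α : Type*} {u : α → ℝ} {c : ℝ} (hc : 0 ≤ c)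
    (hu : ∀ t, 0 ≤ u t) (hu0 : ∃ t, u t = 0) : IsLeast (Set.range (fun t => c * u t)) 0 := by
  obtain ⟨t₀, ht₀⟩ := hu0
  refine ⟨⟨t₀, by simp [ht₀]⟩, ?_⟩
  rintro _ ⟨t, rfl⟩
  exact mul_nonneg hc (hu t)

theorem range_eq_sum_weights_general
    (w : N → ℝ) (u : ∀ i, X i → ℝ) (f : (∀ i, X i) → ℝ)
    (hw : ∀ i, 0 < w i)
    (hu01 : ∀ i t, u i t ∈ Set.Icc (0 : ℝ) 1)
    (hu0 : ∀ i, ∃ t, u i t = 0) (hu1 : ∀ i, ∃ t, u i t = 1)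
    (hf : ∀ y, f y = ∑ i, w i * u i (y i)) :
    ∀ (x : ∀ i, X i) (S : Finset N), ymax f x S - ymin f x S = ∑ k ∈ S, w k := by
  intro x S
  have hmin i : IsLeast (Set.range (fun t => w i * u i t)) 0 :=
    isLeast_range_const_mul (hw i).le (fun t => (hu01 i t).1) (hu0 i)
  have hmax i : IsGreatest (Set.range (fun t => w i * u i t)) (w i) :=
    isGreatest_range_const_mul (hw i).le (fun t => (hu01 i t).2) (hu1 i)
  simpa using ymax_sub_ymin_of_additive (g := fun i t => w i * u i t) hf hmin hmax

/-- For a linear additive model, the range of `f` over variations of the features in `S`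
equals the sum of their weights. -/
theorem range_eq_sum_weights
    (w : N → ℝ) (u : ∀ i, X i → ℝ) (f : (∀ i, X i) → ℝ)
    (hw : ∀ i, 0 < w i) (hwsum : ∑ i, w i = 1)
    (hu01 : ∀ i t, u i t ∈ Set.Icc (0 : ℝ) 1)
    (hu0 : ∀ i, ∃ t, u i t = 0) (hu1 : ∀ i, ∃ t, u i t = 1)
    (hf : ∀ y, f y = ∑ i, w i * u i (y i)) :
    ∀ (x : ∀ i, X i) (S : Finset N), ymax f x S - ymin f x S = ∑ k ∈ S, w k :=
  range_eq_sum_weights_general w u f hw hu01 hu0 hu1 hf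
end

section
/- Let N be a finite set, let f : (N → ℝ) → ℝ be the linear function f(y) = w₀ + Σ_{i∈N} w_i y_i, and for each i ∈ N let μ_i be a probability measure on ℝ with finite mean m_i = ∫ t dμ_i(t) (the features are independent with distribution the product of the μ_i). Fix an instance x : N → ℝ and define the cooperative game v_x(S) = ∫ f(y) d(Π_{j∉S} μ_j) where y_j = x_j for j ∈ S and the remaining coordinates are integrated out, minus the full expectation ∫ f d(Π_{j∈N} μ_j). Then the Shapley value of each player i in the game v_x equals φ_i(v_x) = w_i·(x_i − m_i). -/
/-- The Shapley value `φ_i(v) = Σ_{S ⊆ N∖{i}} (|S|!·(|N|−|S|−1)!/|N|!)·(v(S∪{i}) − v(S))`. -/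
noncomputable def shapley {N : Type*} [Fintype N] [DecidableEq N]
    (v : Finset N → ℝ) (i : N) : ℝ :=
  ∑ S ∈ (Finset.univ.erase i).powerset,
    ((S.card.factorial * (Fintype.card N - S.card - 1).factorial : ℝ) /
        (Fintype.card N).factorial) *
      (v (insert i S) - v S)

/-!
Under the product measure the payoff of a linear model is again linear: integrating out the
coordinate `j` replaces `y j` by its mean `m j`. Hence the marginal contribution of `i` to any
coalition is `w i * (x i - m i)`, and the Shapley weights of the coalitions not containing `i`
sum to one.
-/

open MeasureTheory Finset

section Shapley

variable {N : Type*} [Fintype N] [DecidableEq N]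

theorem sum_shapley_weights (i : N) :
    ∑ S ∈ (univ.erase i).powerset,
      ((S.card.factorial * (Fintype.card N - S.card - 1).factorial : ℝ) /
        (Fintype.card N).factorial) = 1 := by
  have : Nonempty N := ⟨i⟩
  obtain ⟨n, hn⟩ := Nat.exists_eq_succ_of_ne_zero (Fintype.card_ne_zero (α := N))
  have hcard : (univ.erase i).card = n := by simp [hn]
  rw [hn, sum_powerset_apply_card
    (fun k => ((k.factorial * (n + 1 - k - 1).factorial : ℝ) / (n + 1).factorial)), hcard]
  have hterm : ∀ k ∈ range (n + 1),
      n.choose k • ((k.factorial * (n + 1 - k - 1).factorial : ℝ) / (n + 1).factorial) =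
        1 / (n + 1) := by
    intro k hk
    have hkn : k ≤ n := Nat.lt_succ_iff.mp (mem_range.mp hk)
    have hchoose : (n.choose k * k.factorial * (n - k).factorial : ℝ) = n.factorial := by
      exact_mod_cast Nat.choose_mul_factorial_mul_factorial hkn
    rw [show n + 1 - k - 1 = n - k by omega, nsmul_eq_mul, Nat.factorial_succ]
    field_simp
    push_cast
    rw [← hchoose]
    ring
  rw [sum_congr rfl hterm, sum_const, card_range, nsmul_eq_mul]
  push_cast
  field_simp

theorem shapley_eq_of_marginal_eq {v : Finset N → ℝ} {i : N} {c : ℝ}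
    (h : ∀ S, i ∉ S → v (insert i S) - v S = c) : shapley v i = c := by
  unfold shapley
  calc _ = ∑ S ∈ (univ.erase i).powerset,
        ((S.card.factorial * (Fintype.card N - S.card - 1).factorial : ℝ) /
          (Fintype.card N).factorial) * c :=
        sum_congr rfl fun S hS => by
          rw [h S fun hiS => notMem_erase i _ (mem_powerset.mp hS hiS)]
    _ = c := by rw [← sum_mul, sum_shapley_weights, one_mul]

end Shapley

theorem sum_mul_ite_insert_sub {ι : Type*} [Fintype ι] [DecidableEq ι] (a x y : ι → ℝ)
    {i : ι} {S : Finset ι} (hi : i ∉ S) :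
    ∑ j, a j * (if j ∈ insert i S then x j else y j) -
        ∑ j, a j * (if j ∈ S then x j else y j) = a i * (x i - y i) := by
  rw [← sum_sub_distrib, sum_eq_single i]
  · simp [hi, mul_sub]
  · intro j _ hj
    simp [hj]
  · simp

theorem integral_affine_ite_pi {ι : Type*} [Fintype ι] [DecidableEq ι] {μ : ι → Measure ℝ}
    [∀ j, IsProbabilityMeasure (μ j)] (hμ : ∀ j, Integrable id (μ j))
    (c : ℝ) (a x : ι → ℝ) (S : Finset ι) :
    ∫ y, (c + ∑ j, a j * (if j ∈ S then x j else y j)) ∂Measure.pi μ =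
      c + ∑ j, a j * (if j ∈ S then x j else ∫ t, t ∂μ j) := by
  have hint : ∀ j, Integrable (fun y : ι → ℝ => a j * (if j ∈ S then x j else y j))
      (Measure.pi μ) := by
    intro j
    split_ifs
    · exact integrable_const _
    · exact (integrable_eval (hμ j)).const_mul _
  rw [integral_add (integrable_const c) (integrable_finsetSum _ fun j _ => hint j),
    integral_const, integral_finsetSum _ fun j _ => hint j]
  simp only [probReal_univ, one_smul]
  refine congrArg (c + ·) (sum_congr rfl fun j _ => ?_)
  split_ifs
  · simp
  · rw [integral_const_mul, integral_eval]

/-- For the linear model `f(y) = w₀ + Σ_i w_i y_i` with independent features distributed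
according to probability measures `μ i` with means `m i`, the Shapley value of player `i`
in the conditional-expectation game at instance `x` is `w i · (x i − m i)`. -/
theorem shapley_linear_model {N : Type*} [Fintype N] [DecidableEq N]
    (w₀ : ℝ) (w : N → ℝ) (f : (N → ℝ) → ℝ)
    (hf : ∀ y, f y = w₀ + ∑ i, w i * y i)
    (μ : N → Measure ℝ) [∀ i, IsProbabilityMeasure (μ i)]
    (hμ : ∀ i, Integrable (id : ℝ → ℝ) (μ i))
    (m : N → ℝ) (hm : ∀ i, m i = ∫ t, t ∂(μ i))
    (x : N → ℝ) (v : Finset N → ℝ)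
    (hv : ∀ S : Finset N,
      v S = (∫ y, f (fun j => if j ∈ S then x j else y j) ∂(Measure.pi μ)) -
        ∫ y, f y ∂(Measure.pi μ))
    (i : N) :
    shapley v i = w i * (x i - m i) := by
  refine shapley_eq_of_marginal_eq fun S hi => ?_
  simp only [hv, hf, sub_sub_sub_cancel_right]
  rw [integral_affine_ite_pi hμ, integral_affine_ite_pi hμ, add_sub_add_left_eq_sub,
    sum_mul_ite_insert_sub _ _ _ hi, hm]
end
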